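/- Pinching inequality: let σ be a density matrix on a finite-dimensional Hilbert space with spectral decomposition σ = ∑_i λ_i P_i into v distinct eigenvalues with spectral projections P_i, and define the pinching map E_σ(ρ) = ∑_i P_i ρ P_i. Then for every density matrix ρ, ρ ≼ v · E_σ(ρ) in the Loewner order. -/

import Mathlib

open scoped ComplexOrder

/-- The pinching map associated with projections `P i`: `E(ρ) = ∑ i, P i ρ P i`. -/
noncomputable def pinch {d v : ℕ} (P : Fin v → Matrix (Fin d) (Fin d) ℂ)
    (ρ : Matrix (Fin d) (Fin d) ℂ) : Matrix (Fin d) (Fin d) ℂ :=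
  ∑ i, P i * ρ * P i

/-!
Since `∑ i, P i = 1`, we have `ρ = ∑ i, ∑ j, P i * ρ * P j`, and expanding the squares gives
`∑ i, ∑ j, (P i - P j) * ρ * (P i - P j) = 2 • (v • E(ρ) - ρ)`. The left side is a sum of
congruences `Bᴴ * ρ * B` of the positive semidefinite `ρ`, hence positive semidefinite.
-/

theorem Finset.sum_sum_sub_mul_mul_sub {R ι : Type*} [Ring R] [Fintype ι] (P : ι → R)
    (hP : ∑ i, P i = 1) (a : R) :
    ∑ i, ∑ j, (P i - P j) * a * (P i - P j) =
      2 • (Fintype.card ι • ∑ i, P i * a * P i - a) := by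
  have hexpand : ∑ i, ∑ j, P i * a * P j = a := by
    simp_rw [← Finset.mul_sum, ← Finset.sum_mul, hP, one_mul, mul_one]
  simp only [sub_mul, mul_sub, Finset.sum_sub_distrib, Finset.sum_const, Finset.card_univ,
    ← Finset.smul_sum]
  rw [Finset.sum_comm (f := fun i j => P j * a * P i), hexpand]
  abel

theorem Matrix.PosSemidef.card_smul_sum_mul_mul_sub {𝕜 n ι : Type*} [RCLike 𝕜] [Fintype n]
    [DecidableEq n] [Fintype ι] {P : ι → Matrix n n 𝕜} (hP_herm : ∀ i, (P i).IsHermitian)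
    (hP_sum : ∑ i, P i = 1) {A : Matrix n n 𝕜} (hA : A.PosSemidef) :
    ((Fintype.card ι : 𝕜) • ∑ i, P i * A * P i - A).PosSemidef := by
  have hsum_sq : (∑ i, ∑ j, (P i - P j) * A * (P i - P j)).PosSemidef :=
    posSemidef_sum _ fun i _ => posSemidef_sum _ fun j _ => by
      simpa [((hP_herm i).sub (hP_herm j)).eq] using hA.conjTranspose_mul_mul_same (P i - P j)
  rw [Finset.sum_sum_sub_mul_mul_sub P hP_sum A] at hsum_sq
  simpa [smul_smul, ← Nat.cast_smul_eq_nsmul 𝕜] using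
    hsum_sq.smul (a := (2⁻¹ : 𝕜)) (by positivity)

theorem pinching_inequality_general {d v : ℕ}
    (P : Fin v → Matrix (Fin d) (Fin d) ℂ)
    (hP_herm : ∀ i, (P i).IsHermitian)
    (hP_sum : ∑ i, P i = 1)
    (ρ : Matrix (Fin d) (Fin d) ℂ) (hρ : ρ.PosSemidef) :
    ((v : ℂ) • pinch P ρ - ρ).PosSemidef := by
  simpa [pinch] using hρ.card_smul_sum_mul_mul_sub hP_herm hP_sum

/-- Hayashi's pinching inequality: if `σ = ∑ i, λ i • P i` is the spectral decomposition of a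
density matrix into `v` distinct eigenvalues with spectral projections `P i`, then
`ρ ≼ v • E_σ(ρ)` for every density matrix `ρ`. -/
theorem pinching_inequality {d v : ℕ}
    (P : Fin v → Matrix (Fin d) (Fin d) ℂ) (lam : Fin v → ℝ)
    (hP_herm : ∀ i, (P i).IsHermitian)
    (hP_proj : ∀ i, P i * P i = P i)
    (hP_orth : ∀ i j, i ≠ j → P i * P j = 0)
    (hP_sum : ∑ i, P i = 1)
    (hlam_inj : Function.Injective lam)
    (σ : Matrix (Fin d) (Fin d) ℂ)
    (hσ : σ = ∑ i, (lam i : ℂ) • P i)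
    (hσ_psd : σ.PosSemidef) (hσ_tr : σ.trace = 1)
    (ρ : Matrix (Fin d) (Fin d) ℂ) (hρ : ρ.PosSemidef) (hρ_tr : ρ.trace = 1) :
    ((v : ℂ) • pinch P ρ - ρ).PosSemidef :=
  pinching_inequality_general P hP_herm hP_sum ρ hρ
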